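/- Let M be a compact metric space equipped with a continuous flow φ. A point x ∈ M is chain recurrent if and only if x belongs to no null-class level-set cross-section of φ. (This is the case α = 0 of the paper's theorem that the α-recurrent set is exactly the set of points lying on no partial cross-section cohomologous to α.) -/

import Mathlib

/-- An `ε`-chain for the flow `ψ`, with respect to the distance function `d`:
a finite sequence of `n ≥ 1` steps with jump times `τ i ≥ 1`, where each jump
`d (ψ (τ i) (p i)) (p (i+1))` has size `< ε`. -/
def IsChainWith {X : Type*} (ψ : ℝ → X → X) (d : X → X → ℝ) (ε : ℝ) (y z : X) : Prop :=
  ∃ (n : ℕ) (p : ℕ → X) (τ : ℕ → ℝ),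
    1 ≤ n ∧ p 0 = y ∧ p n = z ∧ (∀ i < n, 1 ≤ τ i) ∧
    ∀ i < n, d (ψ (τ i) (p i)) (p (i + 1)) < ε

/-- A point is chain recurrent if for every `ε > 0` there is an `ε`-chain from the
point back to itself. -/
def ChainRecPt {M : Type*} [MetricSpace M] (φ : ℝ → M → M) (x : M) : Prop :=
  ∀ ε : ℝ, 0 < ε → IsChainWith φ dist ε x x

/-- `g` is strictly increasing along the flow `φ` on the set `U`: whenever an orbit
segment stays in `U`, the value of `g` strictly increases along it. -/
def FlowStrictIncrOn {M : Type*} (φ : ℝ → M → M) (g : M → ℝ) (U : Set M) : Prop :=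
  ∀ (x : M) (s s' : ℝ), s < s' → (∀ u ∈ Set.Icc s s', φ u x ∈ U) →
    g (φ s x) < g (φ s' x)

/-- A null-class level-set cross-section of the flow `φ`: a nonempty level set
`g⁻¹ {c}` of a continuous real function which is strictly increasing along the flow
on an open set containing the level set. -/
def IsNullLevelSetCS {M : Type*} [TopologicalSpace M] (φ : ℝ → M → M) (S : Set M) : Prop :=
  S.Nonempty ∧ ∃ (g : M → ℝ) (c : ℝ) (U : Set M),
    Continuous g ∧ S = g ⁻¹' {c} ∧ IsOpen U ∧ S ⊆ U ∧ FlowStrictIncrOn φ g U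


/-! If `x` lies on a level set `g = c` which the flow crosses upwards, then by compactness `g`
increases by a definite amount in unit time on `{c ≤ g}`, so a fine enough chain from `x` stays in
`{c < g}` and never returns to `x`.

Conversely, if no `ε`-chain returns to `x`, let `V` be the forward orbit of the (open) set of points
reached from `x` by `δ`-chains, `δ ≪ ε`: it is an open trapping region, `φ 1 (closure V) ⊆ V`,
and `x ∉ closure V`. Take a bump function `u` equal to `1` exactly on `closure V` and vanishing
at `x` and off `φ 1 ⁻¹' V`. Along the flow, `g = ∫₀³ u ∘ φ_t` has derivative `u ∘ φ_3 - u`, which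
is positive on the open set `{u < 1} ∩ φ 3 ⁻¹' V`, and the level set of `g` through `x` lies there:
`g = 3` on `closure V`, `g ≤ 1` where `φ 3 y ∉ V`, while `2 ≤ g x < 3`. -/

open Set Metric

namespace IsChainWith

variable {X : Type*} {ψ : ℝ → X → X} {d : X → X → ℝ} {δ ε t : ℝ} {x y z : X}

theorem single (ht : 1 ≤ t) (h : d (ψ t x) y < ε) : IsChainWith ψ d ε x y := by
  refine ⟨1, fun i => if i = 0 then x else y, fun _ => t, le_rfl, rfl, rfl, fun _ _ => ht, ?_⟩
  intro i hi
  obtain rfl : i = 0 := by omega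
  simpa using h

theorem mono (hc : IsChainWith ψ d δ x y) (hδε : δ ≤ ε) : IsChainWith ψ d ε x y := by
  obtain ⟨n, p, τ, hn, hp0, hpn, hτ, hjump⟩ := hc
  exact ⟨n, p, τ, hn, hp0, hpn, hτ, fun i hi => (hjump i hi).trans_le hδε⟩

theorem snoc (hc : IsChainWith ψ d ε x y) (ht : 1 ≤ t) (h : d (ψ t y) z < ε) :
    IsChainWith ψ d ε x z := by
  obtain ⟨n, p, τ, hn, hp0, hpn, hτ, hjump⟩ := hc
  refine ⟨n + 1, fun i => if i ≤ n then p i else z, fun i => if i < n then τ i else t,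
    by omega, by simp [hp0], by simp, fun i _ => ?_, fun i hi => ?_⟩
  · dsimp only
    split_ifs with hin
    exacts [hτ i hin, ht]
  · rcases Nat.lt_or_ge i n with hin | hin
    · simpa [hin.le, Nat.succ_le_of_lt hin, hin] using hjump i hin
    · obtain rfl : i = n := by omega
      simpa [hpn] using h

theorem of_last (hy : y = x ∨ IsChainWith ψ d ε x y) (ht : 1 ≤ t) (h : d (ψ t y) z < ε) :
    IsChainWith ψ d ε x z := by
  rcases hy with rfl | hc
  exacts [single ht h, hc.snoc ht h]

theorem exists_last (hc : IsChainWith ψ d ε x z) :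
    ∃ y t, 1 ≤ t ∧ d (ψ t y) z < ε ∧ (y = x ∨ IsChainWith ψ d ε x y) := by
  obtain ⟨n, p, τ, hn, hp0, hpn, hτ, hjump⟩ := hc
  obtain ⟨m, rfl⟩ : ∃ m, n = m + 1 := ⟨n - 1, by omega⟩
  refine ⟨p m, τ m, hτ m (by omega), hpn ▸ hjump m (by omega), ?_⟩
  rcases Nat.eq_zero_or_pos m with rfl | hm
  · exact Or.inl hp0
  · exact Or.inr ⟨m, p, τ, hm, hp0, rfl, fun i hi => hτ i (by omega),
      fun i hi => hjump i (by omega)⟩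

theorem retime (hadd : ∀ (s t : ℝ) (x : X), ψ (s + t) x = ψ s (ψ t x))
    (hc : IsChainWith ψ d δ x y) (hδε : δ ≤ ε) (ht : 0 ≤ t)
    (hmove : ∀ a, d a y < δ → d (ψ t a) z < ε) : IsChainWith ψ d ε x z := by
  obtain ⟨w, τ, hτ, hw, hprefix⟩ := hc.exists_last
  refine of_last (hprefix.imp_right (mono · hδε)) (t := t + τ) (by linarith) ?_
  rw [hadd]
  exact hmove _ hw

theorem mem_of_forall_jump {A B : Set X} (hBA : B ⊆ A)
    (hjump : ∀ y ∈ A, ∀ t, 1 ≤ t → ∀ z, d (ψ t y) z < ε → z ∈ B)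
    (hc : IsChainWith ψ d ε x z) (hx : x ∈ A) : z ∈ B := by
  obtain ⟨n, p, τ, hn, hp0, hpn, hτ, hd⟩ := hc
  have hA : ∀ i ≤ n, p i ∈ A := by
    intro i
    induction i with
    | zero => exact fun _ => hp0 ▸ hx
    | succ i ih =>
      exact fun hi => hBA (hjump _ (ih (by omega)) _ (hτ i (by omega)) _ (hd i (by omega)))
  obtain ⟨m, rfl⟩ : ∃ m, n = m + 1 := ⟨n - 1, by omega⟩
  exact hpn ▸ hjump _ (hA m (by omega)) _ (hτ m (by omega)) _ (hd m (by omega))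

end IsChainWith

theorem isOpen_setOf_isChainWith {X : Type*} [PseudoMetricSpace X] (ψ : ℝ → X → X) (ε : ℝ)
    (x : X) : IsOpen {y | IsChainWith ψ dist ε x y} := by
  refine Metric.isOpen_iff.mpr fun y hy => ?_
  obtain ⟨w, τ, hτ, hw, hprefix⟩ := hy.exists_last
  refine ⟨ε - dist (ψ τ w) y, sub_pos.mpr hw, fun z hz => ?_⟩
  refine IsChainWith.of_last hprefix hτ ?_
  have := dist_triangle (ψ τ w) y z
  rw [mem_ball, dist_comm] at hz
  linarith

namespace FlowStrictIncrOn

variable {M : Type*} [TopologicalSpace M] {φ : ℝ → M → M} {g : M → ℝ} {U : Set M}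

theorem exists_strictMonoOn_ball (hinc : FlowStrictIncrOn φ g U) (hU : IsOpen U) {y : M}
    (hy : Continuous fun t => φ t y) {s : ℝ} (hs : φ s y ∈ U) :
    ∃ r > 0, StrictMonoOn (fun t => g (φ t y)) (ball s r) := by
  obtain ⟨r, hr, hball⟩ := Metric.isOpen_iff.mp (hU.preimage hy) s hs
  refine ⟨r, hr, fun a ha b hb hab => hinc y a b hab fun t ht => hball ?_⟩
  rw [Real.ball_eq_Ioo] at ha hb ⊢
  exact ordConnected_Ioo.out ha hb ht

variable {c : ℝ} (hinc : FlowStrictIncrOn φ g U) (hU : IsOpen U) (hSU : g ⁻¹' {c} ⊆ U)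
  (hg : Continuous g) {y : M} (hy : Continuous fun t => φ t y)
include hinc hU hSU hg hy

theorem le_flow (hcy : c ≤ g (φ 0 y)) {t : ℝ} (ht : 0 ≤ t) : c ≤ g (φ t y) := by
  have hclosed : IsClosed {s | c ≤ g (φ s y)} := isClosed_le continuous_const (hg.comp hy)
  refine (hclosed.inter (isClosed_Icc (a := 0) (b := t))).Icc_subset_of_forall_mem_nhdsWithin hcy
    (fun s ⟨hs, _⟩ => ?_) ⟨ht, le_rfl⟩
  rcases (show c ≤ g (φ s y) from hs).lt_or_eq with hlt | heq
  · refine Filter.mem_of_superset (mem_nhdsWithin_of_mem_nhds ?_)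
      fun _ (h : c < g (φ _ y)) => h.le
    exact (isOpen_lt continuous_const (hg.comp hy)).mem_nhds hlt
  · obtain ⟨r, hr, hmono⟩ := hinc.exists_strictMonoOn_ball hU hy (hSU heq.symm)
    filter_upwards [Ioo_mem_nhdsGT (show s < s + r by linarith)] with s' hs'
    have hball : ∀ {a}, a ∈ Icc s s' → a ∈ ball s r := fun ha => by
      rw [Real.ball_eq_Ioo]; constructor <;> linarith [ha.1, ha.2, hs'.2]
    exact heq.le.trans (hmono (hball (left_mem_Icc.2 hs'.1.le))
      (hball (right_mem_Icc.2 hs'.1.le)) hs'.1).le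

theorem lt_flow (hcy : c ≤ g (φ 0 y)) {t : ℝ} (ht : 0 < t) : c < g (φ t y) := by
  refine (hinc.le_flow hU hSU hg hy hcy ht.le).lt_of_ne fun heq => ?_
  obtain ⟨r, hr, hmono⟩ := hinc.exists_strictMonoOn_ball hU hy (hSU heq.symm)
  obtain ⟨s, hs0, hsr, hst⟩ : ∃ s, 0 ≤ s ∧ t - r < s ∧ s < t :=
    ⟨max (t - r / 2) 0, le_max_right _ _, by linarith [le_max_left (t - r / 2) 0],
      max_lt (by linarith) ht⟩
  have hs : s ∈ ball t r := by
    rw [Real.ball_eq_Ioo]; constructor <;> linarith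
  have hbefore := hmono hs (mem_ball_self hr) hst
  have hafter := hinc.le_flow hU hSU hg hy hcy hs0
  linarith

end FlowStrictIncrOn

theorem exists_continuous_eq_one_iff_of_subset_isOpen {X : Type*} [TopologicalSpace X]
    [PerfectlyNormalSpace X] {K W : Set X} (hK : IsClosed K) (hW : IsOpen W) (hKW : K ⊆ W) :
    ∃ u : X → ℝ, Continuous u ∧ (∀ z, u z ∈ Icc (0 : ℝ) 1) ∧ (∀ z, u z = 1 ↔ z ∈ K) ∧
      ∀ z ∉ W, u z = 0 := by
  obtain ⟨f, hfK, hf⟩ := perfectlyNormalSpace_iff_forall_isClosed_preimage_zero.mp ‹_› K hK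
  obtain ⟨h, hhW, hhK, hh⟩ := exists_continuous_zero_one_of_isClosed hW.isClosed_compl hK
    (disjoint_compl_left_iff_subset.mpr hKW)
  refine ⟨fun z => min (h z) (1 - f z), by fun_prop, fun z => ?_, fun z => ?_, fun z hz => ?_⟩
  · exact ⟨le_min (hh z).1 (by linarith [(hf z).2]), (min_le_left _ _).trans (hh z).2⟩
  · have hzK : z ∈ K ↔ f z = 0 := by rw [hfK]; rfl
    rw [hzK]
    refine ⟨fun h1 => ?_, fun hz0 => by simp [hz0, hhK (hzK.mpr hz0)]⟩
    have := min_le_right (h z) (1 - f z)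
    linarith [(hf z).1]
  · exact le_antisymm ((min_le_left _ _).trans (hhW hz).le)
      (le_min (hh z).1 (by linarith [(hf z).2]))

section OrbitIntegral

variable {M : Type*} [TopologicalSpace M] {φ : ℝ → M → M} {u : M → ℝ} {T : ℝ}

noncomputable def orbitIntegral (φ : ℝ → M → M) (u : M → ℝ) (T : ℝ) (y : M) : ℝ :=
  ∫ t in (0 : ℝ)..T, u (φ t y)

variable (hφc : Continuous fun p : ℝ × M => φ p.1 p.2) (hu : Continuous u)
include hφc hu

theorem continuous_orbitIntegral : Continuous (orbitIntegral φ u T) :=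
  intervalIntegral.continuous_parametric_intervalIntegral_of_continuous' (by fun_prop) 0 T

theorem orbitIntegral_flow_sub_orbitIntegral_flow
    (hφadd : ∀ (s t : ℝ) (x : M), φ (s + t) x = φ s (φ t x)) (y : M) (s s' : ℝ) :
    orbitIntegral φ u T (φ s' y) - orbitIntegral φ u T (φ s y) =
      ∫ t in s..s', (u (φ T (φ t y)) - u (φ t y)) := by
  have hint : ∀ a b : ℝ, IntervalIntegrable (fun t => u (φ t y)) MeasureTheory.volume a b :=
    fun a b => Continuous.intervalIntegrable (by fun_prop) a b
  have hshift : ∀ σ : ℝ, orbitIntegral φ u T (φ σ y) = ∫ t in σ..σ + T, u (φ t y) := fun σ => by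
    simp only [orbitIntegral, ← hφadd]
    rw [intervalIntegral.integral_comp_add_right (fun t => u (φ t y)), zero_add, add_comm]
  rw [hshift, hshift, intervalIntegral.integral_interval_sub_interval_comm' (hint _ _)
    (hint _ _) (hint _ _), intervalIntegral.integral_sub (Continuous.intervalIntegrable
    (by fun_prop) _ _) (hint _ _)]
  simp only [← hφadd]
  rw [← intervalIntegral.integral_comp_add_right (fun t => u (φ t y)) T]
  simp only [add_comm]

theorem flowStrictIncrOn_orbitIntegral
    (hφadd : ∀ (s t : ℝ) (x : M), φ (s + t) x = φ s (φ t x)) {U : Set M}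
    (hU : ∀ z ∈ U, u z < u (φ T z)) : FlowStrictIncrOn φ (orbitIntegral φ u T) U := by
  intro y s s' hss hseg
  rw [← sub_pos, orbitIntegral_flow_sub_orbitIntegral_flow hφc hu hφadd]
  exact intervalIntegral.intervalIntegral_pos_of_pos_on (Continuous.intervalIntegrable
    (by fun_prop) _ _) (fun t ht => sub_pos.mpr (hU _ (hseg t (Ioo_subset_Icc_self ht)))) hss

variable (hu01 : ∀ z, u z ∈ Icc (0 : ℝ) 1) {y : M}
include hu01

theorem orbitIntegral_lt_self (hT : 0 < T) (hy : u (φ 0 y) < 1) : orbitIntegral φ u T y < T := by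
  have := intervalIntegral.integral_lt_integral_of_continuousOn_of_le_of_exists_lt
    (g := fun _ => (1 : ℝ)) hT (Continuous.continuousOn (by fun_prop)) continuousOn_const
    (fun t _ => (hu01 (φ t y)).2) ⟨0, left_mem_Icc.2 hT.le, hy⟩
  simpa [orbitIntegral] using this

variable {a : ℝ} (ha : 0 ≤ a) (haT : a ≤ T)
include ha haT

theorem sub_le_orbitIntegral (h : ∀ t ∈ Icc a T, u (φ t y) = 1) :
    T - a ≤ orbitIntegral φ u T y := by
  have hint (b c : ℝ) : IntervalIntegrable (fun t => u (φ t y)) MeasureTheory.volume b c :=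
    Continuous.intervalIntegrable (by fun_prop) b c
  have hhead := intervalIntegral.integral_nonneg (μ := MeasureTheory.volume) ha
    fun t _ => (hu01 (φ t y)).1
  rw [orbitIntegral, ← intervalIntegral.integral_add_adjacent_intervals (hint 0 a) (hint a T),
    intervalIntegral.integral_congr (a := a) (b := T) (g := fun _ => (1 : ℝ)) fun t ht =>
      h t (by rwa [uIcc_of_le haT] at ht)]
  simp only [intervalIntegral.integral_const, smul_eq_mul, mul_one]
  linarith

theorem orbitIntegral_le_sub (h : ∀ t ∈ Icc 0 a, u (φ t y) = 0) :
    orbitIntegral φ u T y ≤ T - a := by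
  have hint (b c : ℝ) : IntervalIntegrable (fun t => u (φ t y)) MeasureTheory.volume b c :=
    Continuous.intervalIntegrable (by fun_prop) b c
  have htail := intervalIntegral.integral_mono_on haT (hint a T) intervalIntegrable_const
    fun t _ => (hu01 (φ t y)).2
  rw [orbitIntegral, ← intervalIntegral.integral_add_adjacent_intervals (hint 0 a) (hint a T),
    intervalIntegral.integral_congr (a := 0) (b := a) (g := fun _ => (0 : ℝ)) fun t ht =>
      h t (by rwa [uIcc_of_le ha] at ht)]
  simp only [intervalIntegral.integral_const, smul_eq_mul, mul_one, mul_zero] at htail ⊢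
  linarith

end OrbitIntegral

section Flow

variable {M : Type*} [MetricSpace M] {φ : ℝ → M → M}

theorem not_chainRecPt_of_mem_nullLevelSetCS [CompactSpace M]
    (hφc : Continuous fun p : ℝ × M => φ p.1 p.2)
    (hφ0 : ∀ x : M, φ 0 x = x) (hφadd : ∀ (s t : ℝ) (x : M), φ (s + t) x = φ s (φ t x))
    {S : Set M} (hS : IsNullLevelSetCS φ S) {x : M} (hx : x ∈ S) : ¬ ChainRecPt φ x := by
  obtain ⟨-, g, c, U, hg, rfl, hU, hSU, hinc⟩ := hS
  have horbit : ∀ y : M, Continuous fun t => φ t y := fun y => by fun_prop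
  have hle : ∀ y, c ≤ g y → ∀ t, 0 ≤ t → c ≤ g (φ t y) := fun y hy t ht =>
    hinc.le_flow hU hSU hg (horbit y) (by rwa [hφ0]) ht
  obtain ⟨c', hcc', hpush⟩ : ∃ c', c < c' ∧ ∀ y ∈ {y | c ≤ g y}, c' ≤ g (φ 1 y) :=
    (isClosed_le continuous_const hg).isCompact.exists_forall_le' (by fun_prop)
      fun y hy => hinc.lt_flow hU hSU hg (horbit y) (by rwa [hφ0]) one_pos
  obtain ⟨ε, hε, hgε⟩ := Metric.uniformContinuous_iff.mp
    (CompactSpace.uniformContinuous_of_continuous hg) (c' - c) (sub_pos.mpr hcc')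
  have hjump : ∀ y ∈ {y | c ≤ g y}, ∀ t, 1 ≤ t → ∀ z, dist (φ t y) z < ε →
      z ∈ {y | c < g y} := by
    intro y hy t ht z hz
    have hpushed : c' ≤ g (φ t y) := by
      rw [show t = 1 + (t - 1) by ring, hφadd]
      exact hpush _ (hle y hy _ (by linarith))
    have := abs_lt.mp (hgε hz)
    show c < g z
    linarith [this.1]
  intro hcr
  have hreturn : x ∈ {y | c < g y} :=
    (hcr ε hε).mem_of_forall_jump (A := {y | c ≤ g y}) (fun _ (h : c < g _) => h.le) hjump
      hx.symm.le
  exact (show c < g x from hreturn).ne' hx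

theorem exists_forall_dist_flow_lt [CompactSpace M]
    (hφc : Continuous fun p : ℝ × M => φ p.1 p.2) {ε : ℝ} (hε : 0 < ε) :
    ∃ δ > 0, ∀ t ∈ Icc (0 : ℝ) 1, ∀ p q : M, dist p q < δ → dist (φ t p) (φ t q) < ε := by
  obtain ⟨δ, hδ, hd⟩ := Metric.uniformContinuousOn_iff.mp
    ((isCompact_Icc.prod isCompact_univ).uniformContinuousOn_of_continuous hφc.continuousOn) ε hε
  refine ⟨δ, hδ, fun t ht p q hpq => hd (t, p) ⟨ht, mem_univ _⟩ (t, q) ⟨ht, mem_univ _⟩ ?_⟩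
  simpa [Prod.dist_eq] using hpq

theorem exists_trappingRegion_of_not_chainRecPt [CompactSpace M]
    (hφc : Continuous fun p : ℝ × M => φ p.1 p.2)
    (hφ0 : ∀ x : M, φ 0 x = x) (hφadd : ∀ (s t : ℝ) (x : M), φ (s + t) x = φ s (φ t x))
    {x : M} (hx : ¬ ChainRecPt φ x) :
    ∃ V : Set M, IsOpen V ∧ (∀ t, 0 ≤ t → MapsTo (φ t) V V) ∧ MapsTo (φ 1) (closure V) V ∧
      φ 1 x ∈ V ∧ x ∉ closure V := by
  simp only [ChainRecPt, not_forall] at hx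
  obtain ⟨ε, hε, hnot⟩ := hx
  obtain ⟨δ₀, hδ₀, hmove⟩ := exists_forall_dist_flow_lt hφc (half_pos hε)
  obtain ⟨δ, hδ, hδδ₀, hδε⟩ : ∃ δ, 0 < δ ∧ δ ≤ δ₀ ∧ δ ≤ ε / 2 :=
    ⟨min δ₀ (ε / 2), lt_min hδ₀ (half_pos hε), min_le_left _ _, min_le_right _ _⟩
  set R := {y | IsChainWith φ dist δ x y}
  set V := ⋃ (t : ℝ) (_ : 0 ≤ t), φ (-t) ⁻¹' R
  have hmemV : ∀ {z}, z ∈ V ↔ ∃ t, 0 ≤ t ∧ φ (-t) z ∈ R := by simp [V]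
  have hflow_neg : ∀ t z, φ t (φ (-t) z) = z := fun t z => by rw [← hφadd, add_neg_cancel, hφ0]
  have hRV : R ⊆ V := fun y hy => hmemV.2 ⟨0, le_rfl, by rwa [neg_zero, hφ0]⟩
  refine ⟨V, isOpen_biUnion fun t _ => (isOpen_setOf_isChainWith φ δ x).preimage (by fun_prop),
    fun s hs z hz => ?_, fun z hz => ?_, hRV (IsChainWith.single le_rfl (by rwa [dist_self])),
    fun hxV => ?_⟩
  · obtain ⟨t, ht, hzt⟩ := hmemV.1 hz
    refine hmemV.2 ⟨t + s, by linarith, ?_⟩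
    rwa [← hφadd, show -(t + s) + s = -t by ring]
  · obtain ⟨r, hr, hball⟩ := Metric.continuousAt_iff.mp
      ((show Continuous (φ 1) by fun_prop).continuousAt (x := z)) δ hδ
    obtain ⟨z', hz', hzz'⟩ := Metric.mem_closure_iff.mp hz r hr
    obtain ⟨t, ht, hzt⟩ := hmemV.1 hz'
    refine hRV (hzt.snoc (t := 1 + t) (by linarith) ?_)
    rw [hφadd, hflow_neg]
    exact hball (by rwa [dist_comm])
  · obtain ⟨z, hz, hxz⟩ := Metric.mem_closure_iff.mp hxV δ hδ
    obtain ⟨t, ht, hzt⟩ := hmemV.1 hz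
    refine hnot ?_
    rcases le_or_gt 1 t with h1t | ht1
    · refine (hzt.mono (by linarith)).snoc h1t ?_
      rw [hflow_neg, dist_comm]
      linarith
    · refine hzt.retime hφadd (by linarith) ht fun a ha => ?_
      calc dist (φ t a) x ≤ dist (φ t a) (φ t (φ (-t) z)) + dist (φ t (φ (-t) z)) x :=
            dist_triangle _ _ _
        _ < ε / 2 + ε / 2 := by
            gcongr
            · exact hmove t ⟨ht, ht1.le⟩ _ _ (ha.trans_le hδδ₀)
            · rw [hflow_neg, dist_comm]; linarith
        _ = ε := add_halves ε

theorem exists_nullLevelSetCS_of_trappingRegion (hφc : Continuous fun p : ℝ × M => φ p.1 p.2)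
    (hφ0 : ∀ x : M, φ 0 x = x) (hφadd : ∀ (s t : ℝ) (x : M), φ (s + t) x = φ s (φ t x))
    {V : Set M} (hVo : IsOpen V) (hVinv : ∀ t, 0 ≤ t → MapsTo (φ t) V V)
    (hV1 : MapsTo (φ 1) (closure V) V) {x : M} (hx1 : φ 1 x ∈ V) (hx : x ∉ closure V) :
    ∃ S : Set M, IsNullLevelSetCS φ S ∧ x ∈ S := by
  set K := closure V
  have hflow : ∀ t, Continuous (φ t) := fun t => by fun_prop
  have hKinv : ∀ t, 0 ≤ t → MapsTo (φ t) K K := fun t ht => (hVinv t ht).closure (hflow t)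
  have hlate : ∀ y t, 0 ≤ t → φ 1 y ∈ V → φ (t + 1) y ∈ V := fun y t ht hy => by
    rw [hφadd]; exact hVinv t ht hy
  obtain ⟨u, hu, hu01, hu1, hu0⟩ := exists_continuous_eq_one_iff_of_subset_isOpen
    (W := φ 1 ⁻¹' V ∩ {x}ᶜ) isClosed_closure ((hVo.preimage (hflow 1)).inter isOpen_compl_singleton)
    fun z hz => ⟨hV1 hz, fun h => hx (h ▸ hz)⟩
  set g := orbitIntegral φ u 3
  have hgK : ∀ y ∈ K, 3 ≤ g y := fun y hy => by
    simpa using sub_le_orbitIntegral hφc hu hu01 le_rfl (by norm_num) fun t ht =>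
      (hu1 _).mpr (hKinv t ht.1 hy)
  have hgx_lo : 2 ≤ g x := by
    have := sub_le_orbitIntegral hφc hu hu01 (T := 3) (y := x) zero_le_one (by norm_num) fun t ht =>
      (hu1 _).mpr <| subset_closure <| by
        simpa using hlate x (t - 1) (by linarith [ht.1]) hx1
    norm_num at this
    exact this
  have hgx_hi : g x < 3 := orbitIntegral_lt_self hφc hu hu01 three_pos <| by
    rw [hφ0, hu0 x fun h => h.2 rfl]
    exact one_pos
  have hg_escape : ∀ y, φ 3 y ∉ V → g y ≤ 1 := fun y hy => by
    have := orbitIntegral_le_sub hφc hu hu01 (T := 3) (y := y) zero_le_two (by norm_num) fun t ht =>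
      hu0 _ fun hW => hy <| by
        simpa [← hφadd, show 2 - t + 1 + t = 3 by ring] using
          hlate (φ t y) (2 - t) (by linarith [ht.2]) hW.1
    norm_num at this
    exact this
  set U := {z | u z < 1} ∩ φ 3 ⁻¹' V
  have hlevel : g ⁻¹' {g x} ⊆ U := fun y (hy : g y = g x) =>
    ⟨lt_of_le_of_ne (hu01 y).2 fun h => by linarith [hgK y ((hu1 y).mp h)],
      by_contra fun h => by linarith [hg_escape y h]⟩
  refine ⟨g ⁻¹' {g x}, ⟨⟨x, rfl⟩, g, g x, U, continuous_orbitIntegral hφc hu, rfl,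
    (isOpen_lt hu continuous_const).inter (hVo.preimage (hflow 3)), hlevel, ?_⟩, rfl⟩
  exact flowStrictIncrOn_orbitIntegral hφc hu hφadd fun z hz => by
    rw [(hu1 _).mpr (subset_closure hz.2)]
    exact hz.1

end Flow

/-- **Chain recurrence and null-class cross-sections.**
Let `M` be a compact metric space with a continuous flow `φ`. A point `x ∈ M` is chain
recurrent if and only if `x` belongs to no null-class level-set cross-section of `φ`. -/
theorem chainRecPt_iff_mem_no_nullCrossSection
    {M : Type*} [MetricSpace M] [CompactSpace M]
    (φ : ℝ → M → M)
    (hφc : Continuous fun p : ℝ × M => φ p.1 p.2)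
    (hφ0 : ∀ x : M, φ 0 x = x)
    (hφadd : ∀ (s t : ℝ) (x : M), φ (s + t) x = φ s (φ t x))
    (x : M) :
    ChainRecPt φ x ↔ ∀ S : Set M, IsNullLevelSetCS φ S → x ∉ S := by
  refine ⟨fun hx S hS hxS => not_chainRecPt_of_mem_nullLevelSetCS hφc hφ0 hφadd hS hxS hx,
    fun h => by_contra fun hx => ?_⟩
  obtain ⟨V, hVo, hVinv, hV1, hx1, hxV⟩ :=
    exists_trappingRegion_of_not_chainRecPt hφc hφ0 hφadd hx
  obtain ⟨S, hS, hxS⟩ :=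
    exists_nullLevelSetCS_of_trappingRegion hφc hφ0 hφadd hVo hVinv hV1 hx1 hxV
  exact h S hS hxS
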